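/- Let M ∈ [0, 2) and β₀, β₁, β₂ ∈ ℝ with β₁ > 0 and β₂ > 0. Then the vector ξ_g = (√((M+1)/3), 0, 0, √((2−M)/3), 0) belongs to S_C(M), satisfies τ(ξ_g) = 0 and δ(ξ_g) = 0, and minimizes E_U over S_C(M): E_U(ξ_g) ≤ E_U(ξ) for all ξ ∈ S_C(M), with minimum value E_U(ξ_g) = (1/2)(β₀ + β₁M²). -/

import Mathlib

noncomputable section

/-- τ for complex 5-vectors (ξ₂, ξ₁, ξ₀, ξ₋₁, ξ₋₂). -/
def tauC (z2 z1 z0 zm1 zm2 : ℂ) : ℂ :=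
  2 * ((starRingEnd ℂ) z2 * z1 + (starRingEnd ℂ) zm1 * zm2)
    + (Real.sqrt 6 : ℂ) * ((starRingEnd ℂ) z1 * z0 + (starRingEnd ℂ) z0 * zm1)

/-- δ for complex 5-vectors. -/
def deltaC (z2 z1 z0 zm1 zm2 : ℂ) : ℂ :=
  2 * z2 * zm2 - 2 * z1 * zm1 + z0 ^ 2

/-- F_z for complex 5-vectors. -/
def FzC (z2 z1 z0 zm1 zm2 : ℂ) : ℝ :=
  2 * (‖z2‖ ^ 2 - ‖zm2‖ ^ 2)
    + ‖z1‖ ^ 2 - ‖zm1‖ ^ 2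

/-- Membership in S_C(M): mass and magnetization constraints. -/
def memSC (M : ℝ) (z2 z1 z0 zm1 zm2 : ℂ) : Prop :=
  ‖z2‖ ^ 2 + ‖z1‖ ^ 2 + ‖z0‖ ^ 2
      + ‖zm1‖ ^ 2 + ‖zm2‖ ^ 2 = 1 ∧
  2 * ‖z2‖ ^ 2 + ‖z1‖ ^ 2
      - ‖zm1‖ ^ 2 - 2 * ‖zm2‖ ^ 2 = M

/-- The uniform energy E_U. -/
def EU (b0 b1 b2 M : ℝ) (z2 z1 z0 zm1 zm2 : ℂ) : ℝ :=
  (1 / 2) * (b1 * ‖tauC z2 z1 z0 zm1 zm2‖ ^ 2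
    + (b2 / 5) * ‖deltaC z2 z1 z0 zm1 zm2‖ ^ 2
    + b0 + b1 * M ^ 2)

/-!
`E_U` is the constant `(β₀ + β₁ M²) / 2` plus the nonnegative terms `β₁ |τ|² / 2` and
`β₂ |δ|² / 10`, so any point of `S_C(M)` at which `τ` and `δ` both vanish is a minimiser.
The point `ξ_g`, supported on the components `ξ₂` and `ξ₋₁`, is such a point: every monomial of
`τ` and `δ` pairs two components at least one of which is zero.
-/

theorem tauC_eq_zero_of_support_two_neg_one (a b : ℂ) : tauC a 0 0 b 0 = 0 := by
  simp [tauC]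

theorem deltaC_eq_zero_of_support_two_neg_one (a b : ℂ) : deltaC a 0 0 b 0 = 0 := by
  simp [deltaC]

theorem norm_ofReal_sqrt_sq {x : ℝ} (hx : 0 ≤ x) : ‖((Real.sqrt x : ℝ) : ℂ)‖ ^ 2 = x := by
  rw [Complex.norm_real, Real.norm_eq_abs, sq_abs, Real.sq_sqrt hx]

theorem memSC_sqrt_support_two_neg_one {M : ℝ} (hM1 : -1 ≤ M) (hM2 : M ≤ 2) :
    memSC M ((Real.sqrt ((M + 1) / 3) : ℝ) : ℂ) 0 0 ((Real.sqrt ((2 - M) / 3) : ℝ) : ℂ) 0 := by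
  have hplus := norm_ofReal_sqrt_sq (x := (M + 1) / 3) (by linarith)
  have hminus := norm_ofReal_sqrt_sq (x := (2 - M) / 3) (by linarith)
  constructor <;> simp only [hplus, hminus, norm_zero] <;> ring

theorem EU_eq_of_tauC_eq_zero_of_deltaC_eq_zero {b0 b1 b2 M : ℝ} {z2 z1 z0 zm1 zm2 : ℂ}
    (hτ : tauC z2 z1 z0 zm1 zm2 = 0) (hδ : deltaC z2 z1 z0 zm1 zm2 = 0) :
    EU b0 b1 b2 M z2 z1 z0 zm1 zm2 = (1 / 2) * (b0 + b1 * M ^ 2) := by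
  simp only [EU, hτ, hδ, norm_zero]
  ring

theorem le_EU {b0 b1 b2 M : ℝ} (hb1 : 0 ≤ b1) (hb2 : 0 ≤ b2) (z2 z1 z0 zm1 zm2 : ℂ) :
    (1 / 2) * (b0 + b1 * M ^ 2) ≤ EU b0 b1 b2 M z2 z1 z0 zm1 zm2 := by
  have hτ : 0 ≤ b1 * ‖tauC z2 z1 z0 zm1 zm2‖ ^ 2 := by positivity
  have hδ : 0 ≤ (b2 / 5) * ‖deltaC z2 z1 z0 zm1 zm2‖ ^ 2 := by positivity
  rw [EU]
  linarith

theorem stmt11 (M b0 b1 b2 : ℝ) (hM0 : 0 ≤ M) (hM2 : M < 2)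
    (hb1 : 0 < b1) (hb2 : 0 < b2) :
    memSC M ((Real.sqrt ((M + 1) / 3) : ℝ) : ℂ) 0 0
        ((Real.sqrt ((2 - M) / 3) : ℝ) : ℂ) 0 ∧
    tauC ((Real.sqrt ((M + 1) / 3) : ℝ) : ℂ) 0 0
        ((Real.sqrt ((2 - M) / 3) : ℝ) : ℂ) 0 = 0 ∧
    deltaC ((Real.sqrt ((M + 1) / 3) : ℝ) : ℂ) 0 0
        ((Real.sqrt ((2 - M) / 3) : ℝ) : ℂ) 0 = 0 ∧
    (∀ z2 z1 z0 zm1 zm2 : ℂ, memSC M z2 z1 z0 zm1 zm2 →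
      EU b0 b1 b2 M ((Real.sqrt ((M + 1) / 3) : ℝ) : ℂ) 0 0
          ((Real.sqrt ((2 - M) / 3) : ℝ) : ℂ) 0
        ≤ EU b0 b1 b2 M z2 z1 z0 zm1 zm2) ∧
    EU b0 b1 b2 M ((Real.sqrt ((M + 1) / 3) : ℝ) : ℂ) 0 0
        ((Real.sqrt ((2 - M) / 3) : ℝ) : ℂ) 0
      = (1 / 2) * (b0 + b1 * M ^ 2) := by
  have hτ := tauC_eq_zero_of_support_two_neg_one
    ((Real.sqrt ((M + 1) / 3) : ℝ) : ℂ) ((Real.sqrt ((2 - M) / 3) : ℝ) : ℂ)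
  have hδ := deltaC_eq_zero_of_support_two_neg_one
    ((Real.sqrt ((M + 1) / 3) : ℝ) : ℂ) ((Real.sqrt ((2 - M) / 3) : ℝ) : ℂ)
  have hval := EU_eq_of_tauC_eq_zero_of_deltaC_eq_zero (b0 := b0) (b1 := b1) (b2 := b2)
    (M := M) hτ hδ
  refine ⟨memSC_sqrt_support_two_neg_one (by linarith) hM2.le, hτ, hδ, ?_, hval⟩
  intro z2 z1 z0 zm1 zm2 _
  rw [hval]
  exact le_EU hb1.le hb2.le z2 z1 z0 zm1 zm2
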